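/- For all n ≥ 1, the porous exponential domination number of the n-dimensional hypercube satisfies γ*_e(Q_n) ≤ (√2)^n, i.e., γ*_e(Q_n)² ≤ 2^n. -/

import Mathlib

open SimpleGraph Finset

/-- The weight `2^(1 - dist(u,v))` that vertex `u` sends to vertex `v` in graph `G`. -/
noncomputable def expWeight {V : Type*} (G : SimpleGraph V) (u v : V) : ℝ :=
  (2 : ℝ) ^ ((1 : ℤ) - (G.dist u v : ℤ))

/-- `D` is a porous exponential dominating set of `G` if every vertex receives total
weight at least `1`. -/
def IsPorousExpDomSet {V : Type*} [Fintype V] (G : SimpleGraph V) (D : Finset V) : Prop :=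
  ∀ v : V, 1 ≤ ∑ d ∈ D, expWeight G d v

/-- The porous exponential domination number: the minimum cardinality of a porous
exponential dominating set. -/
noncomputable def porousExpDomNumber {V : Type*} [Fintype V] (G : SimpleGraph V) : ℕ :=
  sInf {k | ∃ D : Finset V, IsPorousExpDomSet G D ∧ D.card = k}

/-- The King grid `K_n = P_n ⊠ P_n`: vertices `(i,j)` with `1 ≤ i,j ≤ n`, two distinct
vertices adjacent iff both coordinates differ by at most 1. -/
def kingGrid (n : ℕ) : SimpleGraph (Fin n × Fin n) :=
  SimpleGraph.fromRel fun v w =>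
    ((v.1 : ℤ) - (w.1 : ℤ)).natAbs ≤ 1 ∧ ((v.2 : ℤ) - (w.2 : ℤ)).natAbs ≤ 1

/-- The Slant grid `S_n`: the grid `P_n □ P_n` together with the diagonal edges
`(i,j) ~ (i+1,j+1)`. -/
def slantGrid (n : ℕ) : SimpleGraph (Fin n × Fin n) :=
  SimpleGraph.fromRel fun v w =>
    ((w.1 : ℕ) = (v.1 : ℕ) + 1 ∧ (w.2 : ℕ) = (v.2 : ℕ)) ∨
    ((w.1 : ℕ) = (v.1 : ℕ) ∧ (w.2 : ℕ) = (v.2 : ℕ) + 1) ∨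
    ((w.1 : ℕ) = (v.1 : ℕ) + 1 ∧ (w.2 : ℕ) = (v.2 : ℕ) + 1)

/-- The `n`-dimensional hypercube: vertices are `{0,1}^n`, adjacent iff they differ in
exactly one coordinate. -/
def hypercube (n : ℕ) : SimpleGraph (Fin n → Bool) :=
  SimpleGraph.fromRel fun u v => hammingDist u v = 1

/-!
Split the coordinates of `Q_n` into `⌊n/2⌋` pairs `{2k, 2k+1}` plus, for odd `n`, one leftover
coordinate, and let `D` be the `2^⌊n/2⌋` vertices that are constant on every pair and `0` on the
leftover coordinate. Since `2^(-dist)` is a product over coordinates, the weight `D` sends to a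
vertex `v` factors over the pairs. A pair on which `v` is constant contributes `1 + 1/4`, one on
which it is not contributes `1/2 + 1/2`, and the leftover coordinate costs at most a factor `1/2`,
which the `2` in `2^(1 - dist)` pays for.
-/

open Function

section Hamming

variable {ι : Type*} [Fintype ι] {β : ι → Type*} [∀ i, DecidableEq (β i)]

lemma pow_hammingDist_eq_prod {M : Type*} [CommMonoid M] (a : M) (x y : ∀ i, β i) :
    a ^ hammingDist x y = ∏ i, if x i = y i then 1 else a := by
  rw [prod_ite, prod_const_one, one_mul, prod_const]
  rfl

variable [DecidableEq ι]

lemma hammingDist_update_of_ne {x y : ∀ i, β i} {i : ι} (h : x i ≠ y i) :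
    hammingDist x (update x i (y i)) = 1 := by
  rw [hammingDist, card_eq_one]
  refine ⟨i, ?_⟩
  ext j
  rcases eq_or_ne j i with rfl | hj
  · simp [h]
  · simp [hj]

lemma hammingDist_update_add_one_of_ne {x y : ∀ i, β i} {i : ι} (h : x i ≠ y i) :
    hammingDist (update x i (y i)) y + 1 = hammingDist x y := by
  have hdiff : ({j | update x i (y i) j ≠ y j} : Finset ι) =
      ({j | x j ≠ y j} : Finset ι).erase i := by
    ext j
    rcases eq_or_ne j i with rfl | hj
    · simp
    · simp [hj]
  rw [hammingDist, hammingDist, hdiff, card_erase_add_one (by simpa using h)]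

end Hamming

section Hypercube

variable {n : ℕ}

lemma hypercube_adj {u v : Fin n → Bool} : (hypercube n).Adj u v ↔ hammingDist u v = 1 := by
  rw [hypercube, fromRel_adj, hammingDist_comm v u, or_self, and_iff_right_iff_imp]
  rintro h rfl
  simp at h

lemma hammingDist_le_length_walk {u v : Fin n → Bool} (w : (hypercube n).Walk u v) :
    hammingDist u v ≤ w.length := by
  induction w with
  | nil => simp
  | @cons u w v hadj _ ih =>
    rw [Walk.length_cons]
    have := hammingDist_triangle u w v
    have := hypercube_adj.mp hadj
    omega

lemma exists_walk_length_eq_hammingDist (u v : Fin n → Bool) :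
    ∃ w : (hypercube n).Walk u v, w.length = hammingDist u v := by
  induction h : hammingDist u v generalizing u with
  | zero =>
    obtain rfl := eq_of_hammingDist_eq_zero h
    exact ⟨.nil, rfl⟩
  | succ m ih =>
    obtain ⟨i, hi⟩ := ne_iff.mp (hammingDist_ne_zero.mp (by omega) : u ≠ v)
    have hstep := hammingDist_update_add_one_of_ne hi
    obtain ⟨w, hw⟩ := ih (update u i (v i)) (by omega)
    exact ⟨.cons (hypercube_adj.mpr (hammingDist_update_of_ne hi)) w, by simp [hw]⟩

lemma hypercube_dist (u v : Fin n → Bool) : (hypercube n).dist u v = hammingDist u v := by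
  obtain ⟨w, hw⟩ := exists_walk_length_eq_hammingDist u v
  refine le_antisymm (hw ▸ dist_le w) ?_
  obtain ⟨w', hw'⟩ := Reachable.exists_walk_length_eq_dist ⟨w⟩
  exact hw' ▸ hammingDist_le_length_walk w'

lemma expWeight_hypercube (u v : Fin n → Bool) :
    expWeight (hypercube n) u v = 2 * (2⁻¹ : ℝ) ^ hammingDist u v := by
  rw [expWeight, hypercube_dist, sub_eq_add_neg, zpow_add₀ two_ne_zero, zpow_neg, zpow_one,
    zpow_natCast, inv_pow]

end Hypercube

lemma sum_prod_optionElim {ι κ β M : Type*} [Fintype ι] [Fintype κ] [DecidableEq κ] [Fintype β]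
    [CommSemiring M] (π : ι → Option κ) (c : β) (f : ι → β → M) :
    ∑ x : κ → β, ∏ i, f i ((π i).elim c x) =
      (∏ i with π i = none, f i c) * ∏ k, ∑ b, ∏ i with π i = some k, f i b := by
  have hfactor : ∀ x : κ → β, ∏ i, f i ((π i).elim c x) =
      (∏ i with π i = none, f i c) * ∏ k, ∏ i with π i = some k, f i (x k) := by
    intro x
    rw [← prod_fiberwise univ π, Fintype.prod_option]
    congr 1
    · exact prod_congr rfl fun i hi => by rw [(mem_filter.mp hi).2]; rfl
    · exact prod_congr rfl fun k _ => prod_congr rfl fun i hi => by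
        rw [(mem_filter.mp hi).2]; rfl
  rw [sum_congr rfl fun x _ => hfactor x, ← mul_sum, Fintype.prod_sum]

lemma injective_optionElim_comp {ι κ β : Type*} {π : ι → Option κ}
    (hπ : ∀ k, ∃ i, π i = some k) (c : β) : Injective fun (x : κ → β) i => (π i).elim c x := by
  intro x y hxy
  funext k
  obtain ⟨i, hi⟩ := hπ k
  simpa [hi] using congrFun hxy i

lemma one_le_sum_prod_of_card_le_two {ι : Type*} {s : Finset ι} (hs : #s ≤ 2)
    (v : ι → Bool) :
    1 ≤ ∑ b : Bool, ∏ i ∈ s, if b = v i then (1 : ℝ) else 2⁻¹ := by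
  classical
  interval_cases h : #s
  · simp [card_eq_zero.mp h]
  · obtain ⟨a, rfl⟩ := card_eq_one.mp h
    rw [Fintype.sum_bool, prod_singleton, prod_singleton]
    cases v a <;> norm_num
  · obtain ⟨a, a', hne, rfl⟩ := card_eq_two.mp h
    rw [Fintype.sum_bool, prod_pair hne, prod_pair hne]
    cases v a <;> cases v a' <;> norm_num

lemma one_le_sum_expWeight_hypercube_optionElim {n : ℕ} {κ : Type*} [Fintype κ]
    [DecidableEq κ] {π : Fin n → Option κ} (hsome : ∀ k, #{i | π i = some k} ≤ 2)
    (hnone : #{i | π i = none} ≤ 1) (v : Fin n → Bool) :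
    1 ≤ ∑ x : κ → Bool, expWeight (hypercube n) (fun i => (π i).elim false x) v := by
  simp only [expWeight_hypercube, pow_hammingDist_eq_prod, ← mul_sum]
  rw [sum_prod_optionElim π false fun i b => if b = v i then (1 : ℝ) else 2⁻¹]
  have hpairs :
      1 ≤ ∏ k, ∑ b : Bool, ∏ i with π i = some k, if b = v i then (1 : ℝ) else 2⁻¹ :=
    one_le_prod fun k _ => one_le_sum_prod_of_card_le_two (hsome k) v
  have hleftover : (2⁻¹ : ℝ) ≤ ∏ i with π i = none, if false = v i then (1 : ℝ) else 2⁻¹ :=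
    calc (2⁻¹ : ℝ) = 2⁻¹ ^ 1 := (pow_one _).symm
      _ ≤ 2⁻¹ ^ #{i | π i = none} := pow_le_pow_of_le_one (by norm_num) (by norm_num) hnone
      _ = ∏ i with π i = none, (2⁻¹ : ℝ) := (prod_const _).symm
      _ ≤ _ := prod_le_prod (fun _ _ => by norm_num) fun i _ => by split_ifs <;> norm_num
  nlinarith

def pairCoord (n : ℕ) (i : Fin n) : Option (Fin (n / 2)) :=
  if h : (i : ℕ) / 2 < n / 2 then some ⟨i / 2, h⟩ else none

section PairCoord

variable {n : ℕ}

lemma pairCoord_eq_some_iff {i : Fin n} {k : Fin (n / 2)} :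
    pairCoord n i = some k ↔ (i : ℕ) / 2 = k := by
  unfold pairCoord
  split_ifs with h
  · simp [Fin.ext_iff]
  · simp only [false_iff]
    omega

lemma pairCoord_eq_none_iff {i : Fin n} : pairCoord n i = none ↔ n / 2 ≤ (i : ℕ) / 2 := by
  unfold pairCoord
  split_ifs with h <;> simp [h]
  omega

lemma card_pairCoord_eq_some_le (k : Fin (n / 2)) : #{i | pairCoord n i = some k} ≤ 2 := by
  refine (card_le_card_of_injOn (fun i : Fin n => (i : ℕ) % 2) (t := range 2)
    (fun i _ => by simp; omega) ?_).trans_eq (card_range 2)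
  intro i hi j hj hij
  simp only [coe_filter, mem_univ, true_and, Set.mem_ofPred_eq, pairCoord_eq_some_iff] at hi hj
  simp only at hij
  omega

lemma card_pairCoord_eq_none_le : #{i | pairCoord n i = none} ≤ 1 := by
  refine card_le_one.mpr fun i hi j hj => Fin.ext ?_
  simp only [mem_filter, mem_univ, true_and, pairCoord_eq_none_iff] at hi hj
  omega

lemma exists_pairCoord_eq_some (k : Fin (n / 2)) : ∃ i, pairCoord n i = some k :=
  ⟨⟨2 * k, by omega⟩, pairCoord_eq_some_iff.mpr (by simp)⟩

end PairCoord

lemma porousExpDomNumber_le_card {V : Type*} [Fintype V] {G : SimpleGraph V} {D : Finset V}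
    (hD : IsPorousExpDomSet G D) : porousExpDomNumber G ≤ #D :=
  Nat.sInf_le ⟨D, hD, rfl⟩

lemma porousExpDomNumber_hypercube_le (n : ℕ) :
    porousExpDomNumber (hypercube n) ≤ 2 ^ (n / 2) := by
  have hinj := injective_optionElim_comp (exists_pairCoord_eq_some (n := n)) false
  have hD : IsPorousExpDomSet (hypercube n)
      (univ.image fun x i => (pairCoord n i).elim false x) := by
    intro v
    rw [sum_image hinj.injOn]
    exact one_le_sum_expWeight_hypercube_optionElim card_pairCoord_eq_some_le
      card_pairCoord_eq_none_le v
  simpa [card_image_of_injective _ hinj] using porousExpDomNumber_le_card hD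

theorem hypercube_porousExpDomNumber_upper_general (n : ℕ) :
    porousExpDomNumber (hypercube n) ^ 2 ≤ 2 ^ n :=
  calc porousExpDomNumber (hypercube n) ^ 2 ≤ (2 ^ (n / 2)) ^ 2 :=
        Nat.pow_le_pow_left (porousExpDomNumber_hypercube_le n) 2
    _ = 2 ^ (n / 2 * 2) := (pow_mul 2 _ 2).symm
    _ ≤ 2 ^ n := Nat.pow_le_pow_right two_pos (Nat.div_mul_le_self n 2)

/-- For `n ≥ 1`, `γ*_e(Q_n) ≤ (√2)^n`, i.e. `γ*_e(Q_n)² ≤ 2^n`. -/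
theorem hypercube_porousExpDomNumber_upper (n : ℕ) (hn : 1 ≤ n) :
    porousExpDomNumber (hypercube n) ^ 2 ≤ 2 ^ n :=
  hypercube_porousExpDomNumber_upper_general n
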